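/- arXiv:2605.13917 — 2 statements merged into one kernel-verified Lean document; each statement's English description precedes it below -/
import Mathlib

section
/- A fuzzy graph G = (V, E⁺, E⁰) with weight function ω admits a clustering of cost 0 if and only if for every connected component C of G⁽⁺⁾ and every pair of distinct vertices u, v ∈ C, the pair {u,v} is a real edge or a fuzzy edge of G. -/
open Finset

/-- A fuzzy graph: a finite vertex set with disjoint symmetric irreflexive sets of
'real' edges and 'fuzzy' edges; remaining pairs of distinct vertices are 'nonedges'. -/
structure FuzzyGraph (V : Type*) where
  real : V → V → Bool
  fuzzy : V → V → Bool
  real_symm : ∀ u v, real u v = real v u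
  fuzzy_symm : ∀ u v, fuzzy u v = fuzzy v u
  real_irrefl : ∀ v, real v v = false
  fuzzy_irrefl : ∀ v, fuzzy v v = false
  not_real_and_fuzzy : ∀ u v, ¬(real u v = true ∧ fuzzy u v = true)

namespace FuzzyGraph

variable {V : Type*}

/-- The pair `{u,v}` is a nonedge: distinct, neither a real nor a fuzzy edge. -/
def nonedge (G : FuzzyGraph V) (u v : V) : Prop :=
  u ≠ v ∧ ¬G.real u v ∧ ¬G.fuzzy u v

instance (G : FuzzyGraph V) [DecidableEq V] (u v : V) : Decidable (G.nonedge u v) :=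
  inferInstanceAs (Decidable (u ≠ v ∧ ¬G.real u v ∧ ¬G.fuzzy u v))

/-- The simple graph `G⁽⁺⁾` of real edges. -/
def plus (G : FuzzyGraph V) : SimpleGraph V where
  Adj u v := G.real u v
  symm := ⟨by intro u v h; rwa [G.real_symm] at h⟩
  loopless := ⟨by intro v h; rw [G.real_irrefl] at h; exact Bool.noConfusion h⟩

/-- The simple graph `G⁽⁰⁾` of fuzzy edges. -/
def zero (G : FuzzyGraph V) : SimpleGraph V where
  Adj u v := G.fuzzy u v
  symm := ⟨by intro u v h; rwa [G.fuzzy_symm] at h⟩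
  loopless := ⟨by intro v h; rw [G.fuzzy_irrefl] at h; exact Bool.noConfusion h⟩

variable [Fintype V] [DecidableEq V]

/-- The real neighborhood `N⁺(v)`. -/
def realNbrs (G : FuzzyGraph V) (v : V) : Finset V := univ.filter fun u => G.real v u

/-- The fuzzy neighborhood `N⁰(v)`. -/
def fuzzyNbrs (G : FuzzyGraph V) (v : V) : Finset V := univ.filter fun u => G.fuzzy v u

/-- The nonneighborhood `N⁻(v)`. -/
def nonNbrs (G : FuzzyGraph V) (v : V) : Finset V := univ.filter fun u => G.nonedge v u

/-- The closed real neighborhood `N⁺[v]`. -/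
def closedRealNbrs (G : FuzzyGraph V) (v : V) : Finset V := insert v (G.realNbrs v)

end FuzzyGraph

/-- `ω` is a valid weight function for `G`: symmetric nonnegative integer weights,
zero exactly on the fuzzy edges. -/
def IsWeight {V : Type*} [Fintype V] [DecidableEq V] (G : FuzzyGraph V) (ω : V → V → ℕ) : Prop :=
  (∀ u v, ω u v = ω v u) ∧ ∀ u v : V, u ≠ v → (ω u v = 0 ↔ G.fuzzy u v)

/-- The unit weight function: weight 1 on real edges and nonedges, 0 on fuzzy edges. -/
def unitW {V : Type*} (G : FuzzyGraph V) : V → V → ℕ := fun u v => if G.fuzzy u v then 0 else 1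

/-- Two vertices lie in a common cluster of the clustering `𝒞`. -/
def together {V : Type*} [Fintype V] [DecidableEq V] (𝒞 : Finpartition (univ : Finset V))
    (u v : V) : Prop :=
  ∃ C ∈ 𝒞.parts, u ∈ C ∧ v ∈ C

instance {V : Type*} [Fintype V] [DecidableEq V] (𝒞 : Finpartition (univ : Finset V)) (u v : V) :
    Decidable (together 𝒞 u v) :=
  inferInstanceAs (Decidable (∃ C ∈ 𝒞.parts, u ∈ C ∧ v ∈ C))

/-- The cost of a clustering: total weight of real edges between different clusters
plus total weight of nonedges inside clusters.  (Each unordered pair is counted twice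
in the sum over ordered pairs, whence the division by 2.) -/
def cost {V : Type*} [Fintype V] [DecidableEq V] (G : FuzzyGraph V) (ω : V → V → ℕ)
    (𝒞 : Finpartition (univ : Finset V)) : ℕ :=
  (∑ p ∈ univ.offDiag,
      ((if G.real p.1 p.2 ∧ ¬together 𝒞 p.1 p.2 then ω p.1 p.2 else 0) +
       (if G.nonedge p.1 p.2 ∧ together 𝒞 p.1 p.2 then ω p.1 p.2 else 0))) / 2

/-- A clique in `G⁽⁺⁾`: pairwise real-adjacent vertices. -/
def IsRealClique {V : Type*} (G : FuzzyGraph V) (K : Finset V) : Prop :=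
  ∀ u ∈ K, ∀ v ∈ K, u ≠ v → G.real u v

/-- A clique in `G⁽⁰⁾`: pairwise fuzzy-adjacent vertices. -/
def IsFuzzyClique {V : Type*} (G : FuzzyGraph V) (K : Finset V) : Prop :=
  ∀ u ∈ K, ∀ v ∈ K, u ≠ v → G.fuzzy u v

/-- A critical clique of `G⁽⁺⁾`: a clique with `⋂_{x ∈ K} N⁺[x] = ⋃_{x ∈ K} N⁺[x]`,
inclusion-wise maximal with this property. -/
def IsCriticalClique {V : Type*} [Fintype V] [DecidableEq V] (G : FuzzyGraph V)
    (K : Finset V) : Prop :=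
  IsRealClique G K ∧ K.inf (G.closedRealNbrs) = K.sup (G.closedRealNbrs) ∧
    ∀ K' : Finset V, K ⊆ K' → IsRealClique G K' →
      K'.inf (G.closedRealNbrs) = K'.sup (G.closedRealNbrs) → K' = K

/-- A simple graph is `c`-closed if every pair of distinct nonadjacent vertices has
fewer than `c` common neighbors. -/
def IsCClosed {V : Type*} (H : SimpleGraph V) (c : ℕ) : Prop :=
  ∀ u v : V, u ≠ v → ¬H.Adj u v → Set.ncard {w | H.Adj u w ∧ H.Adj v w} < c

/-- A fuzzy graph is fuzzy `c`-closed if its fuzzy edge graph `G⁽⁰⁾` is `c`-closed. -/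
def FuzzyCClosed {V : Type*} [Fintype V] [DecidableEq V] (G : FuzzyGraph V) (c : ℕ) : Prop :=
  ∀ u v : V, u ≠ v → ¬G.fuzzy u v → ((G.fuzzyNbrs u) ∩ (G.fuzzyNbrs v)).card < c

/-! All weights off the fuzzy edges are positive and the cost is half of a symmetric sum, so a
clustering has cost zero exactly when every real edge lies inside a cluster and every nonedge runs
between clusters. The first condition forces each component of `G⁽⁺⁾` into a single cluster, so
cost zero is impossible if a component contains a nonedge; otherwise the clustering into the
components of `G⁽⁺⁾` has cost zero. -/

section Together

variable {V : Type*} [Fintype V] [DecidableEq V] {𝒞 : Finpartition (univ : Finset V)}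

lemma together_iff_mem_part {u v : V} : together 𝒞 u v ↔ v ∈ 𝒞.part u :=
  ⟨fun ⟨_, hC, hu, hv⟩ => 𝒞.part_eq_of_mem hC hu ▸ hv,
    fun hv => ⟨𝒞.part u, 𝒞.part_mem.2 (mem_univ u), 𝒞.mem_part_self.2 (mem_univ u), hv⟩⟩

lemma together_comm {u v : V} : together 𝒞 u v ↔ together 𝒞 v u :=
  ⟨fun ⟨C, hC, hu, hv⟩ => ⟨C, hC, hv, hu⟩, fun ⟨C, hC, hv, hu⟩ => ⟨C, hC, hu, hv⟩⟩

lemma together_refl (u : V) : together 𝒞 u u :=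
  together_iff_mem_part.2 (𝒞.mem_part_self.2 (mem_univ u))

lemma together_trans {u v w : V} (huv : together 𝒞 u v) (hvw : together 𝒞 v w) :
    together 𝒞 u w := by
  obtain ⟨C, hC, hu, hv⟩ := huv
  obtain ⟨C', hC', hv', hw⟩ := hvw
  exact ⟨C, hC, hu, 𝒞.eq_of_mem_parts hC' hC hv' hv ▸ hw⟩

lemma together_of_reachable {H : SimpleGraph V} (hadj : ∀ u v, H.Adj u v → together 𝒞 u v)
    {u v : V} (huv : H.Reachable u v) : together 𝒞 u v := by
  obtain ⟨w⟩ := huv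
  induction w with
  | nil => exact together_refl _
  | cons h _ ih => exact together_trans (hadj _ _ h) ih

lemma exists_together_iff (r : Setoid V) : ∃ 𝒞 : Finpartition (univ : Finset V),
    ∀ u v, together 𝒞 u v ↔ r u v := by
  classical
  exact ⟨Finpartition.ofSetoid r, fun _ _ =>
    together_iff_mem_part.trans Finpartition.mem_part_ofSetoid_iff_rel⟩

end Together

lemma Finset.sum_offDiag_div_two_eq_zero_iff {α : Type*} [DecidableEq α] {s : Finset α}
    {f : α × α → ℕ} (hf : ∀ a b, f (a, b) = f (b, a)) :
    (∑ p ∈ s.offDiag, f p) / 2 = 0 ↔ ∀ p ∈ s.offDiag, f p = 0 := by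
  refine ⟨fun h ⟨a, b⟩ hab => ?_, fun h => by rw [sum_eq_zero h, Nat.zero_div]⟩
  obtain ⟨ha, hb, hne⟩ := mem_offDiag.1 hab
  have hpair : f (a, b) + f (b, a) ≤ ∑ p ∈ s.offDiag, f p := by
    rw [← sum_pair (by simp [hne])]
    refine sum_le_sum_of_subset fun p hp => ?_
    rcases mem_insert.1 hp with rfl | hp
    · exact hab
    · rw [mem_singleton.1 hp]; exact mem_offDiag.2 ⟨hb, ha, hne.symm⟩
  have := Nat.div_eq_zero_iff.1 h
  have := hf a b
  omega

lemma FuzzyGraph.nonedge_comm {V : Type*} (G : FuzzyGraph V) {u v : V} :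
    G.nonedge u v ↔ G.nonedge v u := by
  simp only [FuzzyGraph.nonedge, G.real_symm u v, G.fuzzy_symm u v, ne_comm]

section Cost

variable {V : Type*} [Fintype V] [DecidableEq V] {G : FuzzyGraph V} {ω : V → V → ℕ}

lemma IsWeight.pos_of_not_fuzzy (hω : IsWeight G ω) {u v : V} (huv : u ≠ v)
    (hf : ¬G.fuzzy u v) : 0 < ω u v :=
  Nat.pos_of_ne_zero fun h => hf ((hω.2 u v huv).1 h)

lemma cost_eq_zero_iff (hω : IsWeight G ω) (𝒞 : Finpartition (univ : Finset V)) :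
    cost G ω 𝒞 = 0 ↔
      (∀ u v, G.real u v → together 𝒞 u v) ∧ ∀ u v, G.nonedge u v → ¬together 𝒞 u v := by
  rw [cost, sum_offDiag_div_two_eq_zero_iff fun u v => by
    simp only [G.real_symm u v, G.nonedge_comm, together_comm, hω.1 u v]]
  simp only [mem_offDiag, mem_univ, true_and, Prod.forall, Nat.add_eq_zero_iff, ite_eq_right_iff]
  refine ⟨fun h => ⟨fun u v hr => ?_, fun u v hn ht => ?_⟩, fun ⟨hreal, hnon⟩ u v _ =>
    ⟨fun ⟨hr, ht⟩ => absurd (hreal u v hr) ht, fun ⟨hn, ht⟩ => absurd ht (hnon u v hn)⟩⟩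
  · have huv : u ≠ v := G.plus.ne_of_adj hr
    by_contra ht
    exact (hω.pos_of_not_fuzzy huv fun hf => G.not_real_and_fuzzy u v ⟨hr, hf⟩).ne'
      ((h u v huv).1 ⟨hr, ht⟩)
  · exact (hω.pos_of_not_fuzzy hn.1 hn.2.2).ne' ((h u v hn.1).2 ⟨hn, ht⟩)

end Cost

/-- `G` admits a clustering of cost 0 iff any two distinct vertices in a
common connected component of `G⁽⁺⁾` form a real edge or a fuzzy edge. -/
theorem stmt4 {V : Type*} [Fintype V] [DecidableEq V]
    (G : FuzzyGraph V) (ω : V → V → ℕ) (hω : IsWeight G ω) :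
    (∃ 𝒞 : Finpartition (Finset.univ : Finset V), cost G ω 𝒞 = 0) ↔
    (∀ u v : V, u ≠ v → G.plus.Reachable u v → (G.real u v ∨ G.fuzzy u v)) := by
  simp only [cost_eq_zero_iff hω]
  constructor
  · rintro ⟨𝒞, hreal, hnon⟩ u v huv hreach
    by_contra! h
    exact hnon u v ⟨huv, by simpa using h.1, by simpa using h.2⟩
      (together_of_reachable hreal hreach)
  · intro h
    obtain ⟨𝒞, h𝒞⟩ := exists_together_iff G.plus.reachableSetoid
    refine ⟨𝒞, fun u v huv => (h𝒞 u v).2 (SimpleGraph.Adj.reachable huv),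
      fun u v ⟨huv, hr, hf⟩ ht => ?_⟩
    rcases h u v huv ((h𝒞 u v).1 ht) with h' | h'
    exacts [hr h', hf h']
end

section
/- Let G = (V, E⁺, E⁰) be a fuzzy graph that is fuzzy c-closed for an integer c ≥ 1, and let k be a nonnegative integer. If v is a vertex with |N⁺(v)| > 2kc and |N⁰(v)| ≥ c, then v has a fuzzy neighbor u with |N⁺(v) ∩ N⁺(u)| > k or |N⁺(v) ∩ N⁻(u)| > k. -/
open Finset

/-!
Suppose every fuzzy neighbour `u` of `v` has at most `k` vertices of `R = N⁺(v)` in each of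
`N⁺(u)` and `N⁻(u)`, and fix `c` fuzzy neighbours `F` of `v`. Each `u ∈ F` is then fuzzy-adjacent
to at least `|R| - 2k` vertices of `R`, while each `w ∈ R` is not fuzzy-adjacent to `v`, so by
`c`-closure it has at most `c - 1` fuzzy neighbours in `F ⊆ N⁰(v)`. Double counting the fuzzy
edges between `F` and `R` gives `c (|R| - 2k) ≤ |R| (c - 1)`, i.e. `|R| ≤ 2kc`.
-/

namespace FuzzyGraph

variable {V : Type*} {G : FuzzyGraph V} {u v w : V}

theorem ne_of_real (h : G.real v w) : v ≠ w := by
  rintro rfl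
  simp [G.real_irrefl] at h

theorem not_fuzzy_of_real (h : G.real v w) : ¬G.fuzzy v w :=
  fun hf => G.not_real_and_fuzzy v w ⟨h, hf⟩

variable [Fintype V]

@[simp]
theorem mem_realNbrs : w ∈ G.realNbrs v ↔ G.real v w := by simp [realNbrs]

@[simp]
theorem mem_fuzzyNbrs : w ∈ G.fuzzyNbrs v ↔ G.fuzzy v w := by simp [fuzzyNbrs]

variable [DecidableEq V]

@[simp]
theorem mem_nonNbrs : w ∈ G.nonNbrs v ↔ G.nonedge v w := by simp [nonNbrs]

theorem card_le_card_filter_fuzzy_add_card_inter_realNbrs_add_card_inter_nonNbrs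
    {s : Finset V} (hu : u ∉ s) :
    #s ≤ #{w ∈ s | G.fuzzy u w} + #(s ∩ G.realNbrs u) + #(s ∩ G.nonNbrs u) := by
  have hcover : s ⊆ {w ∈ s | G.fuzzy u w} ∪ (s ∩ G.realNbrs u) ∪ (s ∩ G.nonNbrs u) := by
    intro w hw
    have huw : u ≠ w := by rintro rfl; exact hu hw
    by_cases hf : G.fuzzy u w <;> by_cases hr : G.real u w <;>
      simp [hw, hf, hr, huw, nonedge]
  exact (card_le_card hcover).trans <|
    (card_union_le _ _).trans (Nat.add_le_add_right (card_union_le _ _) _)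

end FuzzyGraph

theorem FuzzyCClosed.card_filter_fuzzy_lt {V : Type*} [Fintype V] [DecidableEq V]
    {G : FuzzyGraph V} {c : ℕ} (hcl : FuzzyCClosed G c) {v w : V} (hvw : v ≠ w)
    (hnf : ¬G.fuzzy v w) {s : Finset V} (hs : s ⊆ G.fuzzyNbrs v) :
    #{u ∈ s | G.fuzzy u w} < c := by
  refine lt_of_le_of_lt (card_le_card fun u hu => ?_) (hcl v w hvw hnf)
  rw [mem_filter] at hu
  simpa [G.fuzzy_symm u w] using And.intro (hs hu.1) hu.2

open FuzzyGraph in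
theorem stmt9_general {V : Type*} [Fintype V] [DecidableEq V]
    (G : FuzzyGraph V) (c k : ℕ) (hcl : FuzzyCClosed G c)
    (v : V) (h1 : 2 * k * c < (G.realNbrs v).card) (h2 : c ≤ (G.fuzzyNbrs v).card) :
    ∃ u : V, G.fuzzy v u ∧
      (k < ((G.realNbrs v) ∩ (G.realNbrs u)).card ∨
       k < ((G.realNbrs v) ∩ (G.nonNbrs u)).card) := by
  by_contra! hsparse
  obtain ⟨F, hFv, hFc⟩ := exists_subset_card_eq h2
  set R := G.realNbrs v
  let r : V → V → Prop := fun u w => G.fuzzy u w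
  have hmissed : ∀ u ∈ F, (#R : ℤ) - 2 * k ≤ #(R.bipartiteAbove r u) := by
    intro u hu
    have hvu : G.fuzzy v u := mem_fuzzyNbrs.mp (hFv hu)
    have huR : u ∉ R := fun h => not_fuzzy_of_real (mem_realNbrs.mp h) hvu
    have hsplit := card_le_card_filter_fuzzy_add_card_inter_realNbrs_add_card_inter_nonNbrs
      (G := G) huR
    have hfew := hsparse u hvu
    simp only [bipartiteAbove, r]
    omega
  have hcrowded : ∀ w ∈ R, (#(F.bipartiteBelow r w) : ℤ) ≤ c - 1 := by
    intro w hw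
    have hvw : G.real v w := mem_realNbrs.mp hw
    have hfew := hcl.card_filter_fuzzy_lt (ne_of_real hvw) (not_fuzzy_of_real hvw) hFv
    simp only [bipartiteBelow, r]
    omega
  have hcount := card_nsmul_le_card_nsmul r hmissed hcrowded
  rw [hFc, nsmul_eq_mul, nsmul_eq_mul] at hcount
  have hR : (#R : ℤ) ≤ 2 * k * c := by linarith
  exact (not_lt.mpr (by exact_mod_cast hR)) h1

/-- In a fuzzy `c`-closed graph (`c ≥ 1`), a vertex with more than `2kc` real
neighbors and at least `c` fuzzy neighbors has a fuzzy neighbor `u` with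
`|N⁺(v) ∩ N⁺(u)| > k` or `|N⁺(v) ∩ N⁻(u)| > k`. -/
theorem stmt9 {V : Type*} [Fintype V] [DecidableEq V]
    (G : FuzzyGraph V) (c k : ℕ) (hc : 1 ≤ c) (hcl : FuzzyCClosed G c)
    (v : V) (h1 : 2 * k * c < (G.realNbrs v).card) (h2 : c ≤ (G.fuzzyNbrs v).card) :
    ∃ u : V, G.fuzzy v u ∧
      (k < ((G.realNbrs v) ∩ (G.realNbrs u)).card ∨
       k < ((G.realNbrs v) ∩ (G.nonNbrs u)).card) :=
  stmt9_general G c k hcl v h1 h2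
end
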